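/- arXiv:1610.07436 — 2 statements merged into one kernel-verified Lean document; each statement's English description precedes it below -/
import Mathlib

section
/- Let W : [0,∞) → ℝ be a continuous nonnegative function and K > 0 a constant such that at every time t where W(t) ≥ K, the upper Dini derivative satisfies D₊W(t) ≤ −W(t)². Then W(t) ≤ max{W(0), K} for all t ≥ 0, and moreover W(t) ≤ max{1/t, K} for all t > 0. -/
/-!
Truncate at `K`: the function `max W K` has right slopes bounded by `-W²` where `W > K` and
eventually vanishing where `W ≤ K` (at `W = K` because `-K² < 0`). Hence Mathlib's barrier
comparison applies to it against every barrier `B > K` with `B' > -B²`. The constants `C + ε`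
give `W ≤ max (W 0) K` as `ε → 0`; the hyperbolas `c / t` with `c > 1` (barriers while
`c / t > K`), entered at a time `a` so small that `c / a ≥ max (W 0) K`, give `W t ≤ 1 / t`
as `c → 1` for `t ≤ 1 / K`, and the constant barrier `K` takes over from `t = 1 / K`.
-/

open Set Filter Topology

/-- `D₊W(t)`. Being a real `limsup`, it is the junk value `0` where the difference quotients are
unbounded above. -/
noncomputable def upperDiniDeriv (W : ℝ → ℝ) (t : ℝ) : ℝ :=
  limsup (fun s => (W (t + s) - W t) / s) (𝓝[>] 0)

/-- The sign condition `c < 0` excludes the junk value `limsup f l = 0` of an unbounded `f`. -/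
theorem Real.eventually_lt_of_limsup_le_of_neg {α : Type*} {l : Filter α} {f : α → ℝ}
    {c r : ℝ} (h : limsup f l ≤ c) (hc : c < 0) (hr : c < r) : ∀ᶠ x in l, f x < r := by
  by_cases hf : l.IsBoundedUnder (· ≤ ·) f
  · exact eventually_lt_of_limsup_lt (h.trans_lt hr) hf
  · rw [Real.limsup_of_not_isBoundedUnder hf] at h
    linarith

theorem eventually_slope_lt_of_upperDiniDeriv_le {W : ℝ → ℝ} {x c r : ℝ}
    (h : upperDiniDeriv W x ≤ c) (hc : c < 0) (hr : c < r) :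
    ∀ᶠ z in 𝓝[>] x, slope W x z < r := by
  have hmap : 𝓝[>] x = map (x + ·) (𝓝[>] 0) := by rw [map_add_left_nhdsGT, add_zero]
  rw [hmap, eventually_map]
  filter_upwards [Real.eventually_lt_of_limsup_le_of_neg h hc hr] with s hs
  rwa [slope_def_field, add_sub_cancel_left]

theorem slope_max_const_of_le {W : ℝ → ℝ} {K x z : ℝ} (hx : W x ≤ K) (hz : W z ≤ K) :
    slope (fun s => max (W s) K) x z = 0 := by
  simp [slope_def_field, max_eq_right hx, max_eq_right hz]

theorem slope_max_const_of_lt {W : ℝ → ℝ} {K x z : ℝ} (hx : K < W x) (hz : K < W z) :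
    slope (fun s => max (W s) K) x z = slope W x z := by
  simp [slope_def_field, max_eq_left hx.le, max_eq_left hz.le]

/-- Where `W < K` the truncation `max W K` is locally constant, and where `W = K` the Dini bound
`-K² < 0` pushes `W` below `K` to the right; in both cases the right slopes of `max W K` vanish. -/
theorem eventually_slope_max_const_lt {W : ℝ → ℝ} {K x r : ℝ} (hK : 0 < K)
    (hW : ContinuousWithinAt W (Ioi x) x)
    (hdini : K ≤ W x → upperDiniDeriv W x ≤ -(W x) ^ 2)
    (hr : (if K < W x then -(W x) ^ 2 else 0) < r) :
    ∀ᶠ z in 𝓝[>] x, slope (fun s => max (W s) K) x z < r := by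
  rcases lt_trichotomy (W x) K with hlt | heq | hgt
  · rw [if_neg hlt.not_gt] at hr
    filter_upwards [hW.eventually (gt_mem_nhds hlt)] with z hz
    rwa [slope_max_const_of_le hlt.le hz.le]
  · rw [if_neg heq.not_gt] at hr
    have hneg : -(W x) ^ 2 < 0 := by rw [heq]; nlinarith
    filter_upwards [eventually_slope_lt_of_upperDiniDeriv_le (hdini heq.ge) hneg hneg,
      self_mem_nhdsWithin] with z hz hxz
    have hWz : W z ≤ K := by
      rw [slope_def_field, div_lt_iff₀ (sub_pos.2 hxz)] at hz
      nlinarith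
    rwa [slope_max_const_of_le heq.le hWz]
  · rw [if_pos hgt] at hr
    filter_upwards [eventually_slope_lt_of_upperDiniDeriv_le (hdini hgt.le)
      (by nlinarith) hr, hW.eventually (lt_mem_nhds hgt)] with z hz hKz
    rwa [slope_max_const_of_lt hgt hKz]

theorem image_le_of_upperDiniDeriv_le_neg_sq {W B B' : ℝ → ℝ} {K a b : ℝ} (hK : 0 < K)
    (hW : ContinuousOn W (Icc a b))
    (hdini : ∀ t ∈ Ico a b, K ≤ W t → upperDiniDeriv W t ≤ -(W t) ^ 2)
    (ha : W a ≤ B a) (hBK : ∀ x ∈ Icc a b, K < B x) (hB : ContinuousOn B (Icc a b))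
    (hB' : ∀ x ∈ Ico a b, HasDerivWithinAt B (B' x) (Ici x) x)
    (bound : ∀ x ∈ Ico a b, -(B x) ^ 2 < B' x) :
    ∀ ⦃x⦄, x ∈ Icc a b → W x ≤ B x := by
  intro x hx
  refine (le_max_left _ K).trans <| image_le_of_liminf_slope_right_lt_deriv_boundary'
    (f' := fun t => if K < W t then -(W t) ^ 2 else 0) (hW.sup continuousOn_const)
    (fun t ht r hr => ?_) (max_le ha (hBK a ⟨le_rfl, hx.1.trans hx.2⟩).le) hB hB'
    (fun t ht hWB => ?_) hx
  · have hWt := (hW t (Ico_subset_Icc_self ht)).mono_of_mem_nhdsWithin (Icc_mem_nhdsGT_of_mem ht)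
    exact (eventually_slope_max_const_lt hK hWt (hdini t ht) hr).frequently
  · have hKW : K < W t := by
      by_contra! h
      have := hBK t (Ico_subset_Icc_self ht)
      simp only [max_eq_right h] at hWB
      linarith
    simp only [max_eq_left hKW.le] at hWB
    change (if K < W t then -(W t) ^ 2 else 0) < B' t
    rw [if_pos hKW, hWB]
    exact bound t ht

theorem image_le_const_of_upperDiniDeriv_le_neg_sq {W : ℝ → ℝ} {K C a b : ℝ} (hK : 0 < K)
    (hW : ContinuousOn W (Icc a b))
    (hdini : ∀ t ∈ Ico a b, K ≤ W t → upperDiniDeriv W t ≤ -(W t) ^ 2)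
    (ha : W a ≤ C) (hKC : K ≤ C) :
    ∀ ⦃x⦄, x ∈ Icc a b → W x ≤ C := by
  intro x hx
  refine le_of_forall_pos_le_add fun ε hε => ?_
  refine image_le_of_upperDiniDeriv_le_neg_sq hK hW hdini (B := fun _ => C + ε) (B' := 0)
    (by linarith) (fun _ _ => by linarith) continuousOn_const
    (fun _ _ => hasDerivWithinAt_const _ _ _) (fun _ _ => ?_) hx
  simp only [Pi.zero_apply, Left.neg_neg_iff]
  exact pow_pos (by linarith) 2

theorem image_le_div_of_upperDiniDeriv_le_neg_sq {W : ℝ → ℝ} {K a b c : ℝ} (hK : 0 < K)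
    (hW : ContinuousOn W (Icc a b))
    (hdini : ∀ t ∈ Ico a b, K ≤ W t → upperDiniDeriv W t ≤ -(W t) ^ 2)
    (ha₀ : 0 < a) (hc : 1 < c) (hbc : b * K < c) (ha : W a ≤ c / a) :
    ∀ ⦃x⦄, x ∈ Icc a b → W x ≤ c / x := by
  have hpos : ∀ x ∈ Icc a b, 0 < x := fun x hx => ha₀.trans_le hx.1
  refine image_le_of_upperDiniDeriv_le_neg_sq hK hW hdini (B' := fun x => -c / x ^ 2) ha
    (fun x hx => ?_) (continuousOn_const.div continuousOn_id fun x hx => (hpos x hx).ne')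
    (fun x hx => ?_) (fun x hx => ?_)
  · rw [lt_div_iff₀ (hpos x hx)]
    nlinarith [hx.2]
  · have := (hasDerivAt_inv (hpos x (Ico_subset_Icc_self hx)).ne').const_mul c
    simp only [← div_eq_mul_inv, mul_neg] at this
    rw [neg_div]
    exact this.hasDerivWithinAt
  · have hx₀ := hpos x (Ico_subset_Icc_self hx)
    rw [div_pow, neg_div, neg_lt_neg_iff]
    exact div_lt_div_of_pos_right (by nlinarith) (by positivity)

theorem le_one_div_of_upperDiniDeriv_le_neg_sq {W : ℝ → ℝ} {K M t : ℝ} (hK : 0 < K)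
    (hW : ContinuousOn W (Ioc 0 t))
    (hdini : ∀ s ∈ Ioo 0 t, K ≤ W s → upperDiniDeriv W s ≤ -(W s) ^ 2)
    (hM₀ : 0 < M) (hM : ∀ s ∈ Ioc 0 t, W s ≤ M) (ht : 0 < t) (htK : t ≤ 1 / K) :
    W t ≤ 1 / t := by
  rw [le_div_iff₀ ht]
  refine le_of_forall_gt_imp_ge_of_dense fun c hc => ?_
  set a := min t (c / M)
  have ha₀ : 0 < a := lt_min ht (by positivity)
  have hat : a ≤ t := min_le_left _ _
  have hWa : W a ≤ c / a := (hM a ⟨ha₀, hat⟩).trans <| by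
    rw [le_div_iff₀ ha₀, mul_comm, ← le_div_iff₀ hM₀]
    exact min_le_right _ _
  have htc : t * K < c := by
    rw [le_div_iff₀ hK] at htK
    linarith
  have := image_le_div_of_upperDiniDeriv_le_neg_sq hK
    (hW.mono fun x hx => ⟨ha₀.trans_le hx.1, hx.2⟩)
    (fun s hs => hdini s ⟨ha₀.trans_le hs.1, hs.2⟩) ha₀ hc htc hWa ⟨hat, le_rfl⟩
  rwa [le_div_iff₀ ht] at this

theorem stmt_8_general (W : ℝ → ℝ) (K : ℝ) (hK : 0 < K)
    (hcont : ContinuousOn W (Set.Ici 0))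
    (hdini : ∀ t ≥ (0 : ℝ), K ≤ W t →
      Filter.limsup (fun s => (W (t + s) - W t) / s) (nhdsWithin 0 (Set.Ioi 0))
        ≤ -(W t) ^ 2) :
    (∀ t ≥ (0 : ℝ), W t ≤ max (W 0) K) ∧ (∀ t > (0 : ℝ), W t ≤ max (1 / t) K) := by
  have hW : ∀ {s}, s ⊆ Ici 0 → ContinuousOn W s := hcont.mono
  have hbounded : ∀ t ≥ 0, W t ≤ max (W 0) K := fun t ht =>
    image_le_const_of_upperDiniDeriv_le_neg_sq hK (hW fun x hx => hx.1)
      (fun s hs => hdini s hs.1) (le_max_left _ _) (le_max_right _ _) ⟨ht, le_rfl⟩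
  have hdecay : ∀ t > 0, t ≤ 1 / K → W t ≤ 1 / t := fun t ht htK =>
    le_one_div_of_upperDiniDeriv_le_neg_sq hK (hW fun x hx => hx.1.le)
      (fun s hs => hdini s hs.1.le) (lt_max_of_lt_right hK) (fun s hs => hbounded s hs.1.le) ht htK
  refine ⟨hbounded, fun t ht => ?_⟩
  rcases le_total t (1 / K) with htK | htK
  · exact (hdecay t ht htK).trans (le_max_left _ _)
  · have hK' : 0 < 1 / K := by positivity
    have hWK : W (1 / K) ≤ K := by simpa using hdecay (1 / K) hK' le_rfl
    exact (image_le_const_of_upperDiniDeriv_le_neg_sq hK (hW fun x hx => hK'.le.trans hx.1)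
      (fun s hs => hdini s (hK'.le.trans hs.1)) hWK le_rfl ⟨htK, le_rfl⟩).trans
      (le_max_right _ _)

/-- Tso-type comparison principle: a continuous nonnegative function whose
upper Dini derivative satisfies `D₊W ≤ -W²` wherever `W ≥ K` remains bounded
by `max (W 0) K`, and moreover by `max (1/t) K` for `t > 0`. -/
theorem stmt_8 (W : ℝ → ℝ) (K : ℝ) (hK : 0 < K)
    (hcont : ContinuousOn W (Set.Ici 0))
    (hnonneg : ∀ t ≥ (0 : ℝ), 0 ≤ W t)
    (hdini : ∀ t ≥ (0 : ℝ), K ≤ W t →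
      Filter.limsup (fun s => (W (t + s) - W t) / s) (nhdsWithin 0 (Set.Ioi 0))
        ≤ -(W t) ^ 2) :
    (∀ t ≥ (0 : ℝ), W t ≤ max (W 0) K) ∧ (∀ t > (0 : ℝ), W t ≤ max (1 / t) K) :=
  stmt_8_general W K hK hcont hdini
end

section
/- Let (M, μ) be a finite measure space with μ(M) > 0, H : M → ℝ integrable, and φ : ℝ → ℝ nondecreasing and L-Lipschitz with L > 0, with φ∘H integrable. Let H̄ ∈ ℝ satisfy φ(H̄) = (1/μ(M)) ∫_M φ(H) dμ. Then ∫_M (H − H̄)(φ(H̄) − φ(H)) dμ ≤ −(1/L) ∫_M |φ(H) − φ(H̄)|² dμ. -/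
open MeasureTheory

theorem Monotone.sub_mul_sub_eq_abs_mul_abs {φ : ℝ → ℝ} (hφ : Monotone φ) (x y : ℝ) :
    (x - y) * (φ x - φ y) = |x - y| * |φ x - φ y| := by
  rcases le_total x y with h | h
  · rw [abs_of_nonpos (sub_nonpos.2 h), abs_of_nonpos (sub_nonpos.2 (hφ h))]
    ring
  · rw [abs_of_nonneg (sub_nonneg.2 h), abs_of_nonneg (sub_nonneg.2 (hφ h))]

theorem Monotone.sq_abs_sub_le_mul_sub_mul_sub {φ : ℝ → ℝ} {L x y : ℝ} (hφ : Monotone φ)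
    (hlip : |φ x - φ y| ≤ L * |x - y|) :
    |φ x - φ y| ^ 2 ≤ L * ((x - y) * (φ x - φ y)) :=
  calc |φ x - φ y| ^ 2 = |φ x - φ y| * |φ x - φ y| := sq _
    _ ≤ L * |x - y| * |φ x - φ y| := by gcongr
    _ = L * ((x - y) * (φ x - φ y)) := by rw [hφ.sub_mul_sub_eq_abs_mul_abs]; ring

theorem Monotone.sub_mul_sub_le_neg_inv_mul_sq {φ : ℝ → ℝ} {L x y : ℝ} (hL : 0 < L)
    (hφ : Monotone φ) (hlip : |φ x - φ y| ≤ L * |x - y|) :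
    (x - y) * (φ y - φ x) ≤ -(1 / L) * |φ x - φ y| ^ 2 := by
  have h := hφ.sq_abs_sub_le_mul_sub_mul_sub hlip
  rw [neg_mul, le_neg, one_div, inv_mul_le_iff₀ hL]
  linear_combination h

theorem stmt_18_general {M : Type*} [MeasurableSpace M] (μ : MeasureTheory.Measure M)
    (H : M → ℝ) (φ : ℝ → ℝ) (L Hbar : ℝ) (hL : 0 < L)
    (hmono : Monotone φ) (hlip : ∀ x y : ℝ, |φ x - φ y| ≤ L * |x - y|)
    (hprod : MeasureTheory.Integrable (fun x => (H x - Hbar) * (φ Hbar - φ (H x))) μ) :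
    ∫ x, (H x - Hbar) * (φ Hbar - φ (H x)) ∂μ
      ≤ -(1 / L) * ∫ x, |φ (H x) - φ Hbar| ^ 2 ∂μ := by
  have hpoint (x : M) := hmono.sub_mul_sub_le_neg_inv_mul_sq hL (hlip (H x) Hbar)
  -- `integral_mono_of_nonneg` needs integrability of the larger function only.
  have hintegral : ∫ x, 1 / L * |φ (H x) - φ Hbar| ^ 2 ∂μ
      ≤ ∫ x, -((H x - Hbar) * (φ Hbar - φ (H x))) ∂μ :=
    integral_mono_of_nonneg (ae_of_all _ fun x => by positivity) hprod.neg
      (ae_of_all _ fun x => by linarith [hpoint x])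
  rw [integral_neg, integral_const_mul] at hintegral
  linarith

/-- Quantitative Chebyshev-type inequality: if `φ` is nondecreasing and
`L`-Lipschitz and `φ(H̄)` equals the mean value of `φ(H)`, then
`∫ (H - H̄)(φ(H̄) - φ(H)) dμ ≤ -(1/L) ∫ |φ(H) - φ(H̄)|² dμ`. -/
theorem stmt_18 {M : Type*} [MeasurableSpace M] (μ : MeasureTheory.Measure M)
    [MeasureTheory.IsFiniteMeasure μ] (hμ : 0 < (μ Set.univ).toReal)
    (H : M → ℝ) (φ : ℝ → ℝ) (L Hbar : ℝ) (hL : 0 < L)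
    (hmono : Monotone φ) (hlip : ∀ x y : ℝ, |φ x - φ y| ≤ L * |x - y|)
    (hH : MeasureTheory.Integrable H μ)
    (hφH : MeasureTheory.Integrable (fun x => φ (H x)) μ)
    (hprod : MeasureTheory.Integrable (fun x => (H x - Hbar) * (φ Hbar - φ (H x))) μ)
    (hHbar : φ Hbar = (1 / (μ Set.univ).toReal) * ∫ x, φ (H x) ∂μ) :
    ∫ x, (H x - Hbar) * (φ Hbar - φ (H x)) ∂μ
      ≤ -(1 / L) * ∫ x, |φ (H x) - φ Hbar| ^ 2 ∂μ :=
  stmt_18_general μ H φ L Hbar hL hmono hlip hprod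
end
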